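/- arXiv:1612.01672 — 2 statements merged into one kernel-verified Lean document; each statement's English description precedes it below -/
import Mathlib

section
/- Let ‖·‖ be a norm on ℝ^b, Γ ⊂ ℝ^b a full-rank lattice, and Θ = Γ \ {0}. Then for every real z with 0 < z < b, the series ∑_{θ ∈ Θ} ‖θ‖^{-z} diverges (the family is not summable). -/
/-!
Take a ℤ-basis `B` of `Γ` and put `D = ∑ i, N (B i)`. For `n ≥ 1` the `n ^ b` lattice points
`∑ i, (m i + 1) • B i` with `0 ≤ m i < n` are distinct and nonzero, and the triangle inequality
gives `N ≤ n * D` on them. Hence the partial sums of `∑ N(θ) ^ (-z)` are at least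
`n ^ b * (n * D) ^ (-z) = D ^ (-z) * n ^ (b - z)`, which is unbounded since `z < b`.
-/

open Filter Finset

lemma not_summable_of_tendsto_card_mul {β : Type*} {f : β → ℝ} (hf : ∀ x, 0 ≤ f x)
    (s : ℕ → Finset β) (c : ℕ → ℝ) (hc : ∀ n, ∀ x ∈ s n, c n ≤ f x)
    (hlim : Tendsto (fun n => #(s n) * c n) atTop atTop) : ¬ Summable f := by
  intro hsum
  obtain ⟨n, hn⟩ := (hlim.eventually_gt_atTop (∑' x, f x)).exists
  have hpartial : #(s n) * c n ≤ ∑ x ∈ s n, f x := by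
    simpa using card_nsmul_le_sum (s n) f (c n) (hc n)
  exact (hn.trans_le hpartial).not_ge (hsum.sum_le_tsum _ fun x _ => hf x)

lemma tendsto_natCast_pow_mul_rpow_neg {b : ℕ} {z D : ℝ} (hz : z < b) (hD : 0 < D) :
    Tendsto (fun n : ℕ => (n : ℝ) ^ b * ((n : ℝ) * D) ^ (-z)) atTop atTop := by
  have hrw (n : ℕ) :
      (n : ℝ) ^ ((b : ℝ) - z) * D ^ (-z) = (n : ℝ) ^ b * ((n : ℝ) * D) ^ (-z) := by
    rw [Real.mul_rpow n.cast_nonneg hD.le, ← mul_assoc, sub_eq_add_neg,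
      Real.rpow_add' n.cast_nonneg (by linarith), Real.rpow_natCast]
  refine (Tendsto.atTop_mul_const (Real.rpow_pos_of_pos hD _) ?_).congr hrw
  exact (tendsto_rpow_atTop (by linarith)).comp tendsto_natCast_atTop_atTop

section

variable {E ι : Type*} [AddCommGroup E] [Module ℝ E] [Fintype ι]

lemma Seminorm.map_sum_smul_le (p : Seminorm ℝ E) (v : ι → E) (c : ι → ℝ) {C : ℝ}
    (hc : ∀ i, |c i| ≤ C) : p (∑ i, c i • v i) ≤ C * ∑ i, p (v i) := by
  calc p (∑ i, c i • v i) ≤ ∑ i, p (c i • v i) :=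
        le_sum_of_subadditive p (map_zero p).le (map_add_le_add p) _ _
    _ = ∑ i, |c i| * p (v i) := by simp only [map_smul_eq_mul, Real.norm_eq_abs]
    _ ≤ ∑ i, C * p (v i) := by gcongr with i; exact hc i
    _ = C * ∑ i, p (v i) := (mul_sum ..).symm

lemma Seminorm.map_basis_equivFun_symm_le {Γ : Submodule ℤ E} (p : Seminorm ℝ E)
    (B : Module.Basis ι ℤ Γ) (c : ι → ℤ) {C : ℝ} (hc : ∀ i, |(c i : ℝ)| ≤ C) :
    p (B.equivFun.symm c) ≤ C * ∑ i, p (B i) := by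
  have hcoe : (B.equivFun.symm c : E) = ∑ i, (c i : ℝ) • (B i : E) := by
    simp [Module.Basis.equivFun_symm_apply, Int.cast_smul_eq_zsmul]
  rw [hcoe]
  exact p.map_sum_smul_le _ _ hc

theorem Seminorm.not_summable_rpow_neg_of_basis {Γ : Submodule ℤ E} (B : Module.Basis ι ℤ Γ)
    (p : Seminorm ℝ E) (hp : ∀ x ∈ Γ, x ≠ 0 → 0 < p x) {z : ℝ} (hz0 : 0 < z)
    (hz : z < Fintype.card ι) :
    ¬ Summable fun θ : {x : E // x ∈ Γ ∧ x ≠ 0} => p θ.1 ^ (-z) := by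
  classical
  have : Nonempty ι := Fintype.card_pos_iff.1 (by exact_mod_cast hz0.trans hz)
  let i₀ : ι := Classical.arbitrary ι
  have hne (m : ι → ℕ) : (B.equivFun.symm (fun i => m i + 1) : E) ≠ 0 := by
    intro h
    have := congrFun (B.equivFun.symm.map_eq_zero_iff.1 (Subtype.ext h)) i₀
    simp only [Pi.zero_apply] at this
    omega
  let g (m : ι → ℕ) : {x : E // x ∈ Γ ∧ x ≠ 0} :=
    ⟨B.equivFun.symm (fun i => m i + 1), (B.equivFun.symm _).2, hne m⟩
  have hg : Function.Injective g := fun m m' h => by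
    have h' : (B.equivFun.symm (fun i => (m i : ℤ) + 1) : E) =
        B.equivFun.symm (fun i => m' i + 1) :=
      congrArg (fun θ : {x : E // x ∈ Γ ∧ x ≠ 0} => θ.1) h
    funext i
    simpa using congrFun (B.equivFun.symm.injective (Subtype.ext h')) i
  intro hsum
  set D := ∑ i, p (B i)
  have hD : 0 < D := sum_pos' (fun i _ => apply_nonneg p _)
    ⟨i₀, mem_univ _, hp _ (B i₀).2 (by simpa using B.ne_zero i₀)⟩
  refine not_summable_of_tendsto_card_mul (fun m => Real.rpow_nonneg (apply_nonneg _ _) _)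
    (fun n => Fintype.piFinset fun _ => range n) (fun n => ((n : ℝ) * D) ^ (-z)) ?_ ?_
    (hsum.comp_injective hg)
  · intro n m hm
    have hcoord (i : ι) : |((m i + 1 : ℤ) : ℝ)| ≤ n := by
      have := mem_range.1 (Fintype.mem_piFinset.1 hm i)
      rw [abs_of_nonneg (by positivity)]
      exact_mod_cast this
    exact Real.rpow_le_rpow_of_nonpos (hp _ (g m).2.1 (hne m))
      (p.map_basis_equivFun_symm_le B _ hcoord) (by linarith)
  · simpa using tendsto_natCast_pow_mul_rpow_neg hz hD

end

/-- For a norm `N` on `ℝ^b` and a full-rank lattice `Γ`, the series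
`∑_{θ ∈ Γ \ {0}} N(θ)^{-z}` diverges for every real `z` with `0 < z < b`. -/
theorem stmt_2 (b : ℕ)
    (Γ : Submodule ℤ (EuclideanSpace ℝ (Fin b))) [DiscreteTopology Γ] [IsZLattice ℝ Γ]
    (N : EuclideanSpace ℝ (Fin b) → ℝ)
    (hN0 : ∀ x, N x = 0 ↔ x = 0)
    (hNsmul : ∀ (c : ℝ) x, N (c • x) = |c| * N x)
    (hNadd : ∀ x y, N (x + y) ≤ N x + N y)
    (z : ℝ) (hz0 : 0 < z) (hz : z < (b : ℝ)) :
    ¬ Summable fun θ : {x : EuclideanSpace ℝ (Fin b) // x ∈ Γ ∧ x ≠ 0} =>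
      (N θ.1) ^ (-z) := by
  let p : Seminorm ℝ (EuclideanSpace ℝ (Fin b)) :=
    Seminorm.of N hNadd fun c x => by rw [hNsmul, Real.norm_eq_abs]
  have hp (x) (_ : x ∈ Γ) (hx : x ≠ 0) : 0 < p x :=
    (apply_nonneg p x).lt_of_ne' (mt (hN0 x).1 hx)
  have : Module.Free ℤ Γ := ZLattice.module_free ℝ Γ
  have : Module.Finite ℤ Γ := ZLattice.module_finite ℝ Γ
  have hcard : Fintype.card (Module.Free.ChooseBasisIndex ℤ Γ) = b := by
    rw [← Module.finrank_eq_card_chooseBasisIndex, ZLattice.rank ℝ Γ, finrank_euclideanSpace_fin]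
  exact p.not_summable_rpow_neg_of_basis (Module.Free.chooseBasis ℤ Γ) hp hz0 (by rwa [hcard])
end

section
/- Let (a_n)_{n≥1} be a sequence of nonnegative reals with partial sums A(t) = ∑_{n ≤ t} a_n satisfying A(t) = V·t^b + O(t^{b-1}) for some V > 0 and integer b ≥ 1. Then F(z) = ∑_{n≥1} a_n·n^{-z} converges for real z > b and lim_{z → b⁺} (z − b)·F(z) = b·V. -/
/-!
Abel summation (`LSeries_eq_mul_integral`) gives `F(z) = z ∫₁^∞ A(t) t^(-z-1) dt` for `z > b`.
Writing `A(t) = V t^b + E(t)` with `|E(t)| ≤ C t^(b-1)`, the main term integrates to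
`z V / (z - b)` and the error term to at most `z C / (z - b + 1)`, so
`|(z - b) F(z) - z V| ≤ C z (z - b)`, which tends to `0` as `z → b⁺`.
-/

open Filter Topology Finset MeasureTheory Asymptotics

namespace LSeries

variable (a : ℕ → ℝ) (z : ℝ)

lemma term_ofReal_succ (n : ℕ) :
    term (fun n ↦ (a n : ℂ)) z (n + 1) = ((a (n + 1) * ((n : ℝ) + 1) ^ (-z) : ℝ) : ℂ) := by
  rw [term_of_ne_zero n.succ_ne_zero, Real.rpow_neg (by positivity), Complex.ofReal_mul,
    Complex.ofReal_inv, Complex.ofReal_cpow (by positivity), div_eq_mul_inv]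
  push_cast
  rfl

lemma summable_ofReal_iff :
    LSeriesSummable (fun n ↦ (a n : ℂ)) z ↔
      Summable fun n : ℕ ↦ a (n + 1) * ((n : ℝ) + 1) ^ (-z) := by
  rw [LSeriesSummable, ← summable_nat_add_iff 1, ← Complex.summable_ofReal]
  simp_rw [term_ofReal_succ]

lemma ofReal_eq_tsum :
    LSeries (fun n ↦ (a n : ℂ)) z = ((∑' n : ℕ, a (n + 1) * ((n : ℝ) + 1) ^ (-z) : ℝ) : ℂ) := by
  rw [LSeries, Complex.ofReal_tsum, ← (add_left_injective 1).tsum_eq]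
  · simp_rw [term_ofReal_succ]
  · intro n hn
    exact ⟨n - 1, Nat.sub_add_cancel (Nat.one_le_iff_ne_zero.2 fun h ↦ hn (h ▸ term_zero _ _))⟩

end LSeries

lemma integral_Ioi_one_rpow {p : ℝ} (hp : p < -1) : ∫ t in Set.Ioi (1 : ℝ), t ^ p = -(p + 1)⁻¹ := by
  rw [integral_Ioi_rpow_of_lt hp one_pos, Real.one_rpow, neg_div, one_div]

lemma measurable_sum_Icc_floor (a : ℕ → ℝ) : Measurable fun t : ℝ ↦ ∑ k ∈ Icc 1 ⌊t⌋₊, a k :=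
  (measurable_from_nat (f := fun n ↦ ∑ k ∈ Icc 1 n, a k)).comp Nat.measurable_floor

variable {a : ℕ → ℝ} {V C r z : ℝ}

lemma tsum_eq_mul_integral_sum_Icc_mul_rpow (hr : 0 ≤ r) (hz : r < z)
    (hS : Summable fun n : ℕ ↦ a (n + 1) * ((n : ℝ) + 1) ^ (-z))
    (hO : (fun n : ℕ ↦ ∑ k ∈ Icc 1 n, a k) =O[atTop] fun n ↦ (n : ℝ) ^ r) :
    ∑' n : ℕ, a (n + 1) * ((n : ℝ) + 1) ^ (-z) =
      z * ∫ t in Set.Ioi 1, (∑ k ∈ Icc 1 ⌊t⌋₊, a k) * t ^ (-(z + 1)) := by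
  apply Complex.ofReal_injective
  rw [← LSeries.ofReal_eq_tsum, LSeries_eq_mul_integral _ hr (by simpa)
    ((LSeries.summable_ofReal_iff a z).2 hS) (by exact_mod_cast Complex.isBigO_ofReal_left.2 hO),
    Complex.ofReal_mul, ← integral_complex_ofReal]
  congr 1
  refine setIntegral_congr_fun measurableSet_Ioi fun t ht ↦ ?_
  push_cast
  rw [Complex.ofReal_cpow (zero_le_one.trans ht.le)]
  push_cast
  rfl

lemma abs_integral_sum_Icc_mul_rpow_sub_le
    (h : ∀ t : ℝ, 1 ≤ t → |(∑ k ∈ Icc 1 ⌊t⌋₊, a k) - V * t ^ r| ≤ C * t ^ (r - 1))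
    (hz : r < z) :
    |(∫ t in Set.Ioi 1, (∑ k ∈ Icc 1 ⌊t⌋₊, a k) * t ^ (-(z + 1))) - V / (z - r)| ≤
      C / (z - r + 1) := by
  set E : ℝ → ℝ := fun t ↦ ((∑ k ∈ Icc 1 ⌊t⌋₊, a k) - V * t ^ r) * t ^ (-(z + 1))
  have hsplit : ∀ t ∈ Set.Ioi (1 : ℝ),
      (∑ k ∈ Icc 1 ⌊t⌋₊, a k) * t ^ (-(z + 1)) = V * t ^ (r - z - 1) + E t := by
    intro t ht
    have : t ^ r * t ^ (-(z + 1)) = t ^ (r - z - 1) := by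
      rw [← Real.rpow_add (one_pos.trans ht)]; ring_nf
    simp only [E]
    linear_combination V * this
  have hE_le : ∀ t ∈ Set.Ioi (1 : ℝ), ‖E t‖ ≤ C * t ^ (r - z - 2) := by
    intro t ht
    have ht0 : 0 < t := one_pos.trans ht
    calc ‖E t‖ = |(∑ k ∈ Icc 1 ⌊t⌋₊, a k) - V * t ^ r| * t ^ (-(z + 1)) := by
          rw [Real.norm_eq_abs, abs_mul, abs_of_pos (Real.rpow_pos_of_pos ht0 _)]
      _ ≤ C * t ^ (r - 1) * t ^ (-(z + 1)) := by gcongr; exact h t ht.le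
      _ = C * t ^ (r - z - 2) := by rw [mul_assoc, ← Real.rpow_add ht0]; ring_nf
  have hbound_int : IntegrableOn (fun t : ℝ ↦ C * t ^ (r - z - 2)) (Set.Ioi 1) :=
    (integrableOn_Ioi_rpow_of_lt (by linarith) one_pos).const_mul C
  have hE_int : IntegrableOn E (Set.Ioi 1) := by
    refine hbound_int.mono' ?_ ((ae_restrict_iff' measurableSet_Ioi).2 (ae_of_all _ hE_le))
    exact (((measurable_sum_Icc_floor a).sub (by fun_prop)).mul
      (by fun_prop)).aestronglyMeasurable
  have hmain_int : IntegrableOn (fun t : ℝ ↦ V * t ^ (r - z - 1)) (Set.Ioi 1) :=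
    (integrableOn_Ioi_rpow_of_lt (by linarith) one_pos).const_mul V
  rw [setIntegral_congr_fun measurableSet_Ioi hsplit, integral_add hmain_int hE_int,
    integral_const_mul, integral_Ioi_one_rpow (by linarith)]
  calc |(V * -(r - z - 1 + 1)⁻¹ + ∫ t in Set.Ioi 1, E t) - V / (z - r)|
      = ‖∫ t in Set.Ioi 1, E t‖ := by
        rw [Real.norm_eq_abs, show r - z - 1 + 1 = -(z - r) by ring, inv_neg, neg_neg]; ring_nf
    _ ≤ ∫ t in Set.Ioi 1, C * t ^ (r - z - 2) :=
        norm_integral_le_of_norm_le hbound_int ((ae_restrict_iff' measurableSet_Ioi).2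
          (ae_of_all _ hE_le))
    _ = C / (z - r + 1) := by
        rw [integral_const_mul, integral_Ioi_one_rpow (by linarith),
          show r - z - 2 + 1 = -(z - r + 1) by ring, inv_neg, neg_neg, div_eq_mul_inv]

lemma isBigO_sum_Icc_of_abs_sub_le
    (h : ∀ t : ℝ, 1 ≤ t → |(∑ k ∈ Icc 1 ⌊t⌋₊, a k) - V * t ^ r| ≤ C * t ^ (r - 1)) :
    (fun n : ℕ ↦ ∑ k ∈ Icc 1 n, a k) =O[atTop] fun n ↦ (n : ℝ) ^ r := by
  refine IsBigO.of_bound (|V| + |C|) ?_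
  filter_upwards [eventually_ge_atTop 1] with n hn
  have hn' : (1 : ℝ) ≤ n := by exact_mod_cast hn
  have hdev := h n hn'
  rw [Nat.floor_natCast] at hdev
  have hpow : (n : ℝ) ^ (r - 1) ≤ (n : ℝ) ^ r :=
    Real.rpow_le_rpow_of_exponent_le hn' (by linarith)
  rw [Real.norm_eq_abs, Real.norm_eq_abs, abs_of_nonneg (Real.rpow_nonneg (Nat.cast_nonneg n) r)]
  calc |∑ k ∈ Icc 1 n, a k| ≤ |V * (n : ℝ) ^ r| + C * (n : ℝ) ^ (r - 1) := by
        linarith [abs_sub_abs_le_abs_sub (∑ k ∈ Icc 1 n, a k) (V * (n : ℝ) ^ r)]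
    _ ≤ |V| * (n : ℝ) ^ r + |C| * (n : ℝ) ^ r := by
        rw [abs_mul, abs_of_nonneg (Real.rpow_nonneg (Nat.cast_nonneg n) r)]
        gcongr
        exact (le_abs_self C).trans (by gcongr)
    _ = (|V| + |C|) * (n : ℝ) ^ r := by ring

lemma summable_mul_rpow_neg_of_isBigO (ha : ∀ n, 1 ≤ n → 0 ≤ a n) (hr : 0 ≤ r)
    (hO : (fun n : ℕ ↦ ∑ k ∈ Icc 1 n, a k) =O[atTop] fun n ↦ (n : ℝ) ^ r) (hz : r < z) :
    Summable fun n : ℕ ↦ a (n + 1) * ((n : ℝ) + 1) ^ (-z) := by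
  refine (LSeries.summable_ofReal_iff a z).1 (LSeriesSummable_of_sum_norm_bigO ?_ hr (by simpa))
  refine hO.congr_left fun n ↦ sum_congr rfl fun k hk ↦ ?_
  rw [Complex.norm_real, Real.norm_eq_abs, abs_of_nonneg (ha k (mem_Icc.1 hk).1)]

theorem tendsto_sub_mul_tsum_of_abs_sub_le (ha : ∀ n, 1 ≤ n → 0 ≤ a n) (hr : 0 ≤ r)
    (h : ∀ t : ℝ, 1 ≤ t → |(∑ k ∈ Icc 1 ⌊t⌋₊, a k) - V * t ^ r| ≤ C * t ^ (r - 1)) :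
    (∀ z, r < z → Summable fun n : ℕ ↦ a (n + 1) * ((n : ℝ) + 1) ^ (-z)) ∧
    Tendsto (fun z ↦ (z - r) * ∑' n : ℕ, a (n + 1) * ((n : ℝ) + 1) ^ (-z)) (𝓝[>] r)
      (𝓝 (r * V)) := by
  have hO := isBigO_sum_Icc_of_abs_sub_le h
  have hS := fun z (hz : r < z) ↦ summable_mul_rpow_neg_of_isBigO ha hr hO hz
  refine ⟨hS, ?_⟩
  have hC : 0 ≤ C := (abs_nonneg _).trans (by simpa using h 1 le_rfl)
  have hdev : ∀ z, r < z →
      ‖(z - r) * ∑' n : ℕ, a (n + 1) * ((n : ℝ) + 1) ^ (-z) - z * V‖ ≤ C * (z * (z - r)) := by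
    intro z hz
    have hzr : 0 < z - r := sub_pos.2 hz
    have hpos : 0 < z * (z - r) := mul_pos (hr.trans_lt hz) hzr
    rw [tsum_eq_mul_integral_sum_Icc_mul_rpow hr hz (hS z hz) hO]
    set I := ∫ t in Set.Ioi 1, (∑ k ∈ Icc 1 ⌊t⌋₊, a k) * t ^ (-(z + 1))
    calc ‖(z - r) * (z * I) - z * V‖ = |z * (z - r) * (I - V / (z - r))| := by
          rw [Real.norm_eq_abs]
          congr 1
          field_simp
      _ = z * (z - r) * |I - V / (z - r)| := by
          rw [abs_mul, abs_of_pos hpos]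
      _ ≤ z * (z - r) * (C / (z - r + 1)) := by
          gcongr
          exact abs_integral_sum_Icc_mul_rpow_sub_le h hz
      _ ≤ C * (z * (z - r)) := by
          rw [mul_comm C]
          gcongr
          exact div_le_self hC (by linarith)
  have hbound : Tendsto (fun z ↦ C * (z * (z - r))) (𝓝[>] r) (𝓝 0) :=
    (Continuous.tendsto' (by fun_prop) r 0 (by simp)).mono_left nhdsWithin_le_nhds
  have hmain : Tendsto (fun z ↦ z * V) (𝓝[>] r) (𝓝 (r * V)) :=
    (Continuous.tendsto' (by fun_prop) r _ rfl).mono_left nhdsWithin_le_nhds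
  have herr := squeeze_zero_norm' (eventually_nhdsWithin_of_forall hdev) hbound
  have hsum := herr.add hmain
  rw [zero_add] at hsum
  exact hsum.congr fun z ↦ sub_add_cancel _ _

theorem stmt_10_general (a : ℕ → ℝ) (ha : ∀ n, 1 ≤ n → 0 ≤ a n)
    (V : ℝ) (b : ℕ) (hb : 1 ≤ b)
    (hA : ∃ C : ℝ, ∀ t : ℝ, 1 ≤ t →
      |(∑ n ∈ Finset.Icc 1 ⌊t⌋₊, a n) - V * t ^ b| ≤ C * t ^ (b - 1)) :
    (∀ z : ℝ, (b : ℝ) < z → Summable fun n : ℕ => a (n + 1) * ((n : ℝ) + 1) ^ (-z)) ∧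
    Tendsto (fun z : ℝ => (z - b) * ∑' n : ℕ, a (n + 1) * ((n : ℝ) + 1) ^ (-z))
      (nhdsWithin (b : ℝ) (Set.Ioi (b : ℝ))) (nhds ((b : ℝ) * V)) := by
  obtain ⟨C, hC⟩ := hA
  refine tendsto_sub_mul_tsum_of_abs_sub_le (C := C) ha (Nat.cast_nonneg b) fun t ht ↦ ?_
  rw [Real.rpow_natCast, ← Nat.cast_pred hb, Real.rpow_natCast]
  exact hC t ht

/-- A Tauberian-type statement: if `a_n ≥ 0` and `A(t) = ∑_{n ≤ t} a_n = V·t^b + O(t^{b-1})`,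
then `F(z) = ∑ a_n n^{-z}` converges for real `z > b` and `lim_{z→b⁺} (z-b)·F(z) = b·V`. -/
theorem stmt_10 (a : ℕ → ℝ) (ha : ∀ n, 1 ≤ n → 0 ≤ a n)
    (V : ℝ) (hV : 0 < V) (b : ℕ) (hb : 1 ≤ b)
    (hA : ∃ C : ℝ, ∀ t : ℝ, 1 ≤ t →
      |(∑ n ∈ Finset.Icc 1 ⌊t⌋₊, a n) - V * t ^ b| ≤ C * t ^ (b - 1)) :
    (∀ z : ℝ, (b : ℝ) < z → Summable fun n : ℕ => a (n + 1) * ((n : ℝ) + 1) ^ (-z)) ∧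
    Tendsto (fun z : ℝ => (z - b) * ∑' n : ℕ, a (n + 1) * ((n : ℝ) + 1) ^ (-z))
      (nhdsWithin (b : ℝ) (Set.Ioi (b : ℝ))) (nhds ((b : ℝ) * V)) :=
  stmt_10_general a ha V b hb hA
end
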